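/- arXiv:1709.08686 — 5 statements merged into one kernel-verified Lean document; each statement's English description precedes it below -/
import Mathlib

section
/- The integral of ln(1+e^{-u})² over u from 0 to ∞ equals ζ(3)/4. -/
open MeasureTheory Real

noncomputable def zetaVal (s : ℕ) : ℝ := ∑' k : ℕ, 1 / ((k : ℝ) + 1) ^ s

noncomputable def polylog (m : ℕ) (z : ℝ) : ℝ := ∑' k : ℕ, z ^ (k + 1) / ((k : ℝ) + 1) ^ m

noncomputable def harm (p k : ℕ) : ℝ := ∑ j ∈ Finset.range k, 1 / ((j : ℝ) + 1) ^ p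

/-!
Substituting `x = e^{-u}` turns the integral into `∫₀¹ log²(1+x)/x dx`. With `a = log(1-x)` and
`b = log(1+x)` one has `b² = ((a+b)² + (a-b)²)/2 - a²`, where `a + b = log(1-x²)` and
`a - b = log((1-x)/(1+x))`. The substitutions `x ↦ 1-x`, `x ↦ x²` and `x ↦ (1-x)/(1+x)` reduce the
three resulting integrals to `∫₀¹ log²t/(1-t) dt = 2ζ(3)` and `∫₀¹ log²t/(1-t²) dt = 7ζ(3)/4`,
which follow by expanding the denominator into a geometric series and integrating termwise with
`∫₀¹ t^k log²t dt = 2/(k+1)³`. Altogether `ζ(3)/2 + 7ζ(3)/4 - 2ζ(3) = ζ(3)/4`.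
-/

open Set
open scoped Nat

section Substitution

variable {E : Type*} [NormedAddCommGroup E] [NormedSpace ℝ E]

theorem integral_abs_deriv_smul_comp_of_bijOn {s t : Set ℝ} (hs : MeasurableSet s)
    {f f' : ℝ → ℝ} (hf : BijOn f s t) (hf' : ∀ x ∈ s, HasDerivWithinAt f (f' x) s x)
    (g : ℝ → E) : ∫ x in s, |f' x| • g (f x) = ∫ y in t, g y := by
  rw [← hf.image_eq, integral_image_eq_integral_abs_deriv_smul hs hf' hf.injOn]

theorem bijOn_exp_neg_Ioi : BijOn (fun u : ℝ => rexp (-u)) (Ioi 0) (Ioo 0 1) := by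
  refine InvOn.bijOn (f' := fun x => -log x) ⟨fun u _ => by simp, fun x hx => ?_⟩
    (fun u hu => ⟨exp_pos _, exp_lt_one_iff.2 (neg_neg_of_pos hu)⟩)
    (fun x hx => neg_pos.2 (log_neg hx.1 hx.2))
  simp [exp_log hx.1]

theorem integral_Ioo_zero_one_eq_integral_exp_neg (g : ℝ → E) :
    ∫ x in Ioo 0 1, g x = ∫ u in Ioi 0, rexp (-u) • g (rexp (-u)) := by
  have hderiv : ∀ u ∈ Ioi (0 : ℝ),
      HasDerivWithinAt (fun u : ℝ => rexp (-u)) (-rexp (-u)) (Ioi 0) u := fun u _ =>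
    ((hasDerivAt_neg' u).exp.congr_deriv (by ring)).hasDerivWithinAt
  rw [← integral_abs_deriv_smul_comp_of_bijOn measurableSet_Ioi bijOn_exp_neg_Ioi hderiv]
  simp [abs_of_pos (exp_pos _)]

theorem integral_comp_exp_neg_Ioi_eq_integral_div_Ioo (g : ℝ → ℝ) :
    ∫ u in Ioi 0, g (rexp (-u)) = ∫ x in Ioo 0 1, g x / x := by
  rw [integral_Ioo_zero_one_eq_integral_exp_neg]
  exact setIntegral_congr_fun measurableSet_Ioi fun u _ => by
    rw [smul_eq_mul, mul_div_cancel₀ _ (exp_ne_zero _)]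

theorem bijOn_one_sub_Ioo : BijOn (fun x : ℝ => 1 - x) (Ioo 0 1) (Ioo 0 1) :=
  InvOn.bijOn ⟨fun x _ => sub_sub_cancel 1 x, fun x _ => sub_sub_cancel 1 x⟩
    (fun x hx => ⟨by linarith [hx.2], by linarith [hx.1]⟩)
    (fun x hx => ⟨by linarith [hx.2], by linarith [hx.1]⟩)

theorem integral_comp_one_sub_Ioo (g : ℝ → E) :
    ∫ x in Ioo 0 1, g (1 - x) = ∫ x in Ioo 0 1, g x := by
  simpa using integral_abs_deriv_smul_comp_of_bijOn measurableSet_Ioo bijOn_one_sub_Ioo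
    (fun x _ => ((hasDerivAt_id x).const_sub 1).hasDerivWithinAt) g

end Substitution

theorem bijOn_sq_Ioo : BijOn (fun x : ℝ => x ^ 2) (Ioo 0 1) (Ioo 0 1) :=
  InvOn.bijOn (f' := Real.sqrt) ⟨fun x hx => sqrt_sq hx.1.le, fun x hx => sq_sqrt hx.1.le⟩
    (fun x hx => ⟨pow_pos hx.1 2, pow_lt_one₀ hx.1.le hx.2 two_ne_zero⟩)
    (fun x hx => ⟨sqrt_pos.2 hx.1, (sqrt_lt' one_pos).2 (by simpa using hx.2)⟩)

theorem integral_comp_sq_div_Ioo (g : ℝ → ℝ) :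
    ∫ x in Ioo 0 1, g (x ^ 2) / x = 2⁻¹ * ∫ t in Ioo 0 1, g t / t := by
  rw [← integral_abs_deriv_smul_comp_of_bijOn measurableSet_Ioo bijOn_sq_Ioo
    (fun x _ => (hasDerivAt_pow 2 x).hasDerivWithinAt) (fun t => g t / t),
    ← integral_const_mul]
  refine setIntegral_congr_fun measurableSet_Ioo fun x hx => ?_
  have hx0 : x ≠ 0 := hx.1.ne'
  norm_num [abs_of_pos hx.1]
  field_simp

theorem bijOn_one_sub_div_one_add_Ioo :
    BijOn (fun x : ℝ => (1 - x) / (1 + x)) (Ioo 0 1) (Ioo 0 1) := by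
  have hmaps : MapsTo (fun x : ℝ => (1 - x) / (1 + x)) (Ioo 0 1) (Ioo 0 1) := fun x hx =>
    ⟨div_pos (by linarith [hx.2]) (by linarith [hx.1]),
      (div_lt_one (by linarith [hx.1])).2 (by linarith [hx.1])⟩
  have hinv : ∀ x ∈ Ioo (0 : ℝ) 1, (1 - (1 - x) / (1 + x)) / (1 + (1 - x) / (1 + x)) = x :=
    fun x hx => by
      have : 1 + x ≠ 0 := by linarith [hx.1]
      field_simp
      ring
  exact InvOn.bijOn (f' := fun x => (1 - x) / (1 + x)) ⟨hinv, hinv⟩ hmaps hmaps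

theorem integral_comp_one_sub_div_one_add_div_Ioo (g : ℝ → ℝ) :
    ∫ x in Ioo 0 1, g ((1 - x) / (1 + x)) / x = 2 * ∫ t in Ioo 0 1, g t / (1 - t ^ 2) := by
  have hderiv : ∀ x ∈ Ioo (0 : ℝ) 1,
      HasDerivWithinAt (fun x : ℝ => (1 - x) / (1 + x)) (-2 / (1 + x) ^ 2) (Ioo 0 1) x :=
    fun x hx => by
      have : 1 + x ≠ 0 := by linarith [hx.1]
      refine ((((hasDerivAt_id' x).const_sub 1).div ((hasDerivAt_id' x).const_add 1)
        this).congr_deriv ?_).hasDerivWithinAt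
      field_simp
      ring
  rw [← integral_abs_deriv_smul_comp_of_bijOn measurableSet_Ioo
    bijOn_one_sub_div_one_add_Ioo hderiv (fun t => g t / (1 - t ^ 2)), ← integral_const_mul]
  refine setIntegral_congr_fun measurableSet_Ioo fun x hx => ?_
  have hx0 : x ≠ 0 := hx.1.ne'
  have hx1 : 0 < 1 + x := by linarith [hx.1]
  set y := (1 - x) / (1 + x) with hy
  have hden : 1 - y ^ 2 = 4 * x / (1 + x) ^ 2 := by
    rw [hy]
    field_simp
    ring
  rw [smul_eq_mul, abs_div, abs_neg, abs_two, abs_of_pos (by positivity), hden]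
  field_simp
  ring

theorem integral_pow_mul_neg_log_pow (k n : ℕ) :
    ∫ t in Ioo 0 1, t ^ k * (-log t) ^ n = n ! / ((k : ℝ) + 1) ^ (n + 1) := by
  have hk : (0 : ℝ) < k + 1 := by positivity
  rw [integral_Ioo_zero_one_eq_integral_exp_neg]
  calc ∫ u in Ioi 0, rexp (-u) • (rexp (-u) ^ k * (-log (rexp (-u))) ^ n)
      = ∫ u in Ioi 0, u ^ (((n : ℝ) + 1) - 1) * rexp (-((k + 1) * u)) := by
        refine setIntegral_congr_fun measurableSet_Ioi fun u _ => ?_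
        rw [log_exp, neg_neg, add_sub_cancel_right, rpow_natCast, smul_eq_mul, ← exp_nat_mul,
          ← mul_assoc, ← exp_add]
        ring_nf
    _ = n ! / ((k : ℝ) + 1) ^ (n + 1) := by
        rw [integral_rpow_mul_exp_neg_mul_Ioi (by positivity) hk, Gamma_nat_eq_factorial,
          div_rpow zero_le_one hk.le, one_rpow]
        norm_cast
        field_simp

theorem summable_one_div_nat_add_one_pow {s : ℕ} (hs : 2 ≤ s) :
    Summable fun k : ℕ => 1 / ((k : ℝ) + 1) ^ s := by
  simpa using (summable_nat_add_iff 1).2 (summable_one_div_nat_pow.2 hs)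

theorem integral_neg_log_pow_div_one_sub_pow {m n : ℕ} (hm : 0 < m) (hn : 0 < n) :
    ∫ t in Ioo 0 1, (-log t) ^ n / (1 - t ^ m) =
      n ! * ∑' k : ℕ, 1 / ((m : ℝ) * k + 1) ^ (n + 1) := by
  set F : ℕ → ℝ → ℝ := fun k t => t ^ (m * k) * (-log t) ^ n
  have hF : ∀ k, ∫ t in Ioo 0 1, F k t = n ! / ((m : ℝ) * k + 1) ^ (n + 1) := fun k => by
    simp only [F, integral_pow_mul_neg_log_pow, Nat.cast_mul]
  have hF_nonneg : ∀ k, ∀ t ∈ Ioo (0 : ℝ) 1, 0 ≤ F k t := fun k t ht =>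
    mul_nonneg (pow_nonneg ht.1.le _) (pow_nonneg (neg_nonneg.2 (log_nonpos ht.1.le ht.2.le)) _)
  have hF_int : ∀ k, IntegrableOn (F k) (Ioo 0 1) := fun k =>
    .of_integral_ne_zero (by rw [hF]; positivity)
  have hF_sum : Summable fun k => ∫ t in Ioo 0 1, ‖F k t‖ := by
    have : Summable fun k : ℕ => 1 / ((m * k : ℕ) + 1 : ℝ) ^ (n + 1) :=
      (summable_one_div_nat_add_one_pow (by omega)).comp_injective (mul_right_injective₀ hm.ne')
    refine (this.mul_left (n ! : ℝ)).congr fun k => ?_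
    rw [setIntegral_congr_fun measurableSet_Ioo fun t ht => norm_of_nonneg (hF_nonneg k t ht), hF]
    push_cast
    ring
  calc ∫ t in Ioo 0 1, (-log t) ^ n / (1 - t ^ m)
      = ∫ t in Ioo 0 1, ∑' k, F k t := by
        refine setIntegral_congr_fun measurableSet_Ioo fun t ht => ?_
        have htm : t ^ m < 1 := pow_lt_one₀ ht.1.le ht.2 hm.ne'
        simp only [F, pow_mul, tsum_mul_right, tsum_geometric_of_lt_one (pow_nonneg ht.1.le m) htm]
        ring
    _ = ∑' k, ∫ t in Ioo 0 1, F k t :=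
        (integral_tsum_of_summable_integral_norm hF_int hF_sum).symm
    _ = n ! * ∑' k : ℕ, 1 / ((m : ℝ) * k + 1) ^ (n + 1) := by
        simp only [hF, div_eq_mul_one_div (n ! : ℝ), tsum_mul_left]

theorem zetaVal_pos {s : ℕ} (hs : 2 ≤ s) : 0 < zetaVal s :=
  (summable_one_div_nat_add_one_pow hs).tsum_pos (fun _ => by positivity) 0 (by norm_num)

theorem tsum_one_div_two_mul_add_one_pow {s : ℕ} (hs : 2 ≤ s) :
    ∑' k : ℕ, 1 / (2 * (k : ℝ) + 1) ^ s = (1 - 1 / 2 ^ s) * zetaVal s := by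
  set f : ℕ → ℝ := fun k => 1 / ((k : ℝ) + 1) ^ s
  have hf := summable_one_div_nat_add_one_pow hs
  have hodd : ∀ k, f (2 * k + 1) = 1 / 2 ^ s * f k := fun k => by
    simp only [f]
    push_cast
    rw [show 2 * (k : ℝ) + 1 + 1 = 2 * (k + 1) by ring, mul_pow, one_div_mul_one_div]
  have heven : ∀ k, f (2 * k) = 1 / (2 * (k : ℝ) + 1) ^ s := fun k => by
    simp only [f]
    push_cast
    rfl
  have he : Summable fun k => f (2 * k) :=
    hf.comp_injective (mul_right_injective₀ two_ne_zero)
  have ho : Summable fun k => f (2 * k + 1) :=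
    hf.comp_injective fun a b h => by omega
  have hsplit := tsum_even_add_odd he ho
  simp only [heven, hodd, tsum_mul_left] at hsplit
  change _ + _ * zetaVal s = zetaVal s at hsplit
  linarith

theorem integral_neg_log_pow_div_one_sub {n : ℕ} (hn : 0 < n) :
    ∫ t in Ioo 0 1, (-log t) ^ n / (1 - t) = n ! * zetaVal (n + 1) := by
  simpa [zetaVal] using integral_neg_log_pow_div_one_sub_pow one_pos hn

theorem integral_neg_log_pow_div_one_sub_sq {n : ℕ} (hn : 0 < n) :
    ∫ t in Ioo 0 1, (-log t) ^ n / (1 - t ^ 2) =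
      n ! * ((1 - 1 / 2 ^ (n + 1)) * zetaVal (n + 1)) := by
  rw [integral_neg_log_pow_div_one_sub_pow two_pos hn, Nat.cast_two,
    tsum_one_div_two_mul_add_one_pow (by omega)]

theorem integral_log_one_sub_sq_div : ∫ x in Ioo 0 1, log (1 - x) ^ 2 / x = 2 * zetaVal 3 := by
  simpa [neg_sq] using (integral_comp_one_sub_Ioo fun t => (-log t) ^ 2 / (1 - t)).trans
    (integral_neg_log_pow_div_one_sub two_pos)

theorem integral_log_one_sub_sq_sq_div : ∫ x in Ioo 0 1, log (1 - x ^ 2) ^ 2 / x = zetaVal 3 := by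
  rw [integral_comp_sq_div_Ioo fun t => log (1 - t) ^ 2, integral_log_one_sub_sq_div]
  ring

theorem integral_log_one_sub_div_one_add_sq_div :
    ∫ x in Ioo 0 1, log ((1 - x) / (1 + x)) ^ 2 / x = 7 / 2 * zetaVal 3 := by
  rw [integral_comp_one_sub_div_one_add_div_Ioo fun t => log t ^ 2]
  simp_rw [← neg_sq (log _)]
  rw [integral_neg_log_pow_div_one_sub_sq two_pos]
  norm_num
  ring

theorem sq_log_one_add_eq {x : ℝ} (hx : x ∈ Ioo (-1) 1) :
    log (1 + x) ^ 2 =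
      2⁻¹ * log (1 - x ^ 2) ^ 2 + 2⁻¹ * log ((1 - x) / (1 + x)) ^ 2 - log (1 - x) ^ 2 := by
  have hm : 1 - x ≠ 0 := by linarith [hx.2]
  have hp : 1 + x ≠ 0 := by linarith [hx.1]
  rw [show 1 - x ^ 2 = (1 - x) * (1 + x) by ring, log_mul hm hp, log_div hm hp]
  ring

theorem stmt2 : ∫ u in Set.Ioi (0:ℝ), (Real.log (1 + Real.exp (-u)))^2 = zetaVal 3 / 4 := by
  have hz : zetaVal 3 ≠ 0 := (zetaVal_pos (by norm_num)).ne'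
  have hsub := integral_log_one_sub_sq_div
  have hsq := integral_log_one_sub_sq_sq_div
  have hdiv := integral_log_one_sub_div_one_add_sq_div
  have int_sub : IntegrableOn (fun x => log (1 - x) ^ 2 / x) (Ioo 0 1) :=
    .of_integral_ne_zero (by rw [hsub]; simpa using hz)
  have int_sq : IntegrableOn (fun x => log (1 - x ^ 2) ^ 2 / x) (Ioo 0 1) :=
    .of_integral_ne_zero (by rw [hsq]; exact hz)
  have int_div : IntegrableOn (fun x => log ((1 - x) / (1 + x)) ^ 2 / x) (Ioo 0 1) :=
    .of_integral_ne_zero (by rw [hdiv]; simpa using hz)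
  have int_sq_div : IntegrableOn (fun x => 2⁻¹ * (log (1 - x ^ 2) ^ 2 / x) +
      2⁻¹ * (log ((1 - x) / (1 + x)) ^ 2 / x)) (Ioo 0 1) :=
    (int_sq.const_mul _).add (int_div.const_mul _)
  have hsplit : ∀ x ∈ Ioo (0 : ℝ) 1, log (1 + x) ^ 2 / x =
      2⁻¹ * (log (1 - x ^ 2) ^ 2 / x) + 2⁻¹ * (log ((1 - x) / (1 + x)) ^ 2 / x)
        - log (1 - x) ^ 2 / x := fun x hx => by
    rw [sq_log_one_add_eq ⟨by linarith [hx.1], hx.2⟩]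
    ring
  calc ∫ u in Ioi 0, log (1 + rexp (-u)) ^ 2
      = ∫ x in Ioo 0 1, log (1 + x) ^ 2 / x := by
        exact integral_comp_exp_neg_Ioi_eq_integral_div_Ioo fun x => log (1 + x) ^ 2
    _ = 2⁻¹ * zetaVal 3 + 2⁻¹ * (7 / 2 * zetaVal 3) - 2 * zetaVal 3 := by
        rw [setIntegral_congr_fun measurableSet_Ioo hsplit,
          integral_sub int_sq_div int_sub,
          integral_add (int_sq.const_mul _) (int_div.const_mul _), integral_const_mul,
          integral_const_mul, hsub, hsq, hdiv]
    _ = zetaVal 3 / 4 := by ring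
end

section
/- The alternating Euler sum Σ_{k≥1} (−1)^{k−1} H_k/k² equals (5/8)ζ(3), where H_k = Σ_{j=1}^k 1/j. -/
/-!
Let `K(m, n) = 1 / ((m + 1)(n + 1)(m + n + 2))`. Summing `K(m, ·)` telescopes to
`H_{m+1} / (m + 1)²`, so the alternating sum is `S = ∑ (-1)^m K(m, n)`. Summing `K` over an
antidiagonal `m + n = s` gives `2 H_{s+1} / (s + 2)²`, and since `H_{s+1} = H_s + 1 / (s + 1)`,
for `|x| ≤ 1`
  `x ∑ x^(m+n) K = 2 (∑ x^m K - ∑ x^k / (k + 1)³)`.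
At `x = 1` this gives `∑ K = 2ζ(3)`; at `x = -1` it ties `∑ (-1)^(m+n) K` to `S` and to
`η(3) = ¾ ζ(3)`. The symmetry of `K`, the identity
`(-1)^m + (-1)^n = 1 + (-1)^(m+n) - 4·[m, n both odd]` and `K(2a+1, 2b+1) = K(a, b) / 8` give
  `2S = ∑ K + ∑ (-1)^(m+n) K - ½ ∑ K`,
and eliminating yields `S = 5ζ(3) / 8`.
-/

open MeasureTheory Real

open Finset Filter Topology

theorem HasSum.sum_antidiagonal {α A : Type*} [AddCommMonoid α] [TopologicalSpace α]
    [ContinuousAdd α] [RegularSpace α] [AddCommMonoid A] [HasAntidiagonal A]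
    {f : A × A → α} {a : α} (hf : HasSum f a) :
    HasSum (fun n ↦ ∑ p ∈ antidiagonal n, f p) a :=
  (HasAntidiagonal.sigmaAntidiagonalEquivProd.hasSum_iff.mpr hf).sigma fun n ↦
    (sum_coe_sort (antidiagonal n) f) ▸ hasSum_fintype _

theorem hasSum_sub_add_of_antitone {f : ℕ → ℝ} (hf : Antitone f)
    (hf0 : Tendsto f atTop (𝓝 0)) (d : ℕ) :
    HasSum (fun n ↦ f n - f (n + d)) (∑ i ∈ range d, f i) := by
  rw [hasSum_iff_tendsto_nat_of_nonneg fun n ↦ sub_nonneg.2 (hf (Nat.le_add_right n d))]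
  have hpartial (N : ℕ) : ∑ n ∈ range N, (f n - f (n + d)) =
      ∑ i ∈ range d, f i - ∑ i ∈ range d, f (N + i) := by
    have h₁ := sum_range_add f N d
    have h₂ := sum_range_add f d N
    rw [Nat.add_comm d N] at h₂
    simp only [Nat.add_comm d] at h₂
    rw [sum_sub_distrib]
    linarith
  simp_rw [hpartial]
  have htail : Tendsto (fun N ↦ ∑ i ∈ range d, f (N + i)) atTop (𝓝 0) := by
    simpa using tendsto_finsetSum (range d) fun i _ ↦ hf0.comp (tendsto_add_atTop_nat i)
  simpa using tendsto_const_nhds.sub htail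

theorem Summable.mul_left_of_abs_le_one {ι : Type*} {f c : ι → ℝ} (hf : Summable f)
    (hc : ∀ i, |c i| ≤ 1) : Summable fun i ↦ c i * f i :=
  .of_norm_bounded hf.abs fun i ↦ by
    rw [Real.norm_eq_abs, abs_mul]
    exact mul_le_of_le_one_left (abs_nonneg _) (hc i)

theorem abs_pow_le_one {x : ℝ} (hx : |x| ≤ 1) (k : ℕ) : |x ^ k| ≤ 1 := by
  rw [abs_pow]; exact pow_le_one₀ (abs_nonneg x) hx

theorem tsum_indicator_odd {α : Type*} [AddCommMonoid α] [TopologicalSpace α] (f : ℕ → α) :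
    ∑' k, {k : ℕ | Odd k}.indicator f k = ∑' k, f (2 * k + 1) := by
  have hinj : (fun k : ℕ ↦ 2 * k + 1).Injective := fun a b h ↦ by simpa using h
  rw [← hinj.tsum_eq fun k hk ↦ by
    obtain ⟨j, hj⟩ : Odd k := Set.support_indicator_subset (s := {k : ℕ | Odd k}) hk
    exact ⟨j, hj.symm⟩]
  exact tsum_congr fun k ↦ Set.indicator_of_mem (s := {k : ℕ | Odd k}) (odd_two_mul_add_one k) f

theorem tsum_indicator_odd_odd {α : Type*} [AddCommMonoid α] [TopologicalSpace α]
    (f : ℕ × ℕ → α) :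
    ∑' p, {p : ℕ × ℕ | Odd p.1 ∧ Odd p.2}.indicator f p =
      ∑' p : ℕ × ℕ, f (2 * p.1 + 1, 2 * p.2 + 1) := by
  have hinj : (fun p : ℕ × ℕ ↦ (2 * p.1 + 1, 2 * p.2 + 1)).Injective := fun p q h ↦ by
    simp only [Prod.mk.injEq] at h
    exact Prod.ext (by omega) (by omega)
  rw [← hinj.tsum_eq fun p hp ↦ by
    obtain ⟨⟨i, hi⟩, ⟨j, hj⟩⟩ : Odd p.1 ∧ Odd p.2 :=
      Set.support_indicator_subset (s := {p : ℕ × ℕ | Odd p.1 ∧ Odd p.2}) hp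
    exact ⟨(i, j), Prod.ext hi.symm hj.symm⟩]
  exact tsum_congr fun p ↦
    Set.indicator_of_mem (s := {p : ℕ × ℕ | Odd p.1 ∧ Odd p.2})
      ⟨odd_two_mul_add_one p.1, odd_two_mul_add_one p.2⟩ f

theorem tsum_neg_one_pow_mul {f : ℕ → ℝ} (hf : Summable f) :
    ∑' k, (-1) ^ k * f k = ∑' k, f k - 2 * ∑' k, f (2 * k + 1) := by
  have hpoint (k : ℕ) : (-1) ^ k * f k = f k - 2 * {k : ℕ | Odd k}.indicator f k := by
    rcases k.even_or_odd with hk | hk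
    · simp [hk.neg_one_pow,
        Set.indicator_of_notMem (show k ∉ {k : ℕ | Odd k} from Nat.not_odd_iff_even.mpr hk)]
    · simp [hk.neg_one_pow, Set.indicator_of_mem (show k ∈ {k : ℕ | Odd k} from hk)]; ring
  rw [tsum_congr hpoint, hf.tsum_sub ((hf.indicator _).mul_left 2), tsum_mul_left,
    tsum_indicator_odd]

theorem two_mul_tsum_neg_one_pow_fst_mul {f : ℕ × ℕ → ℝ} (hf : Summable f)
    (hswap : ∀ p, f p.swap = f p) :
    2 * ∑' p, (-1) ^ p.1 * f p = ∑' p, f p + ∑' p, (-1) ^ (p.1 + p.2) * f p -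
      4 * ∑' p : ℕ × ℕ, f (2 * p.1 + 1, 2 * p.2 + 1) := by
  have hsign := abs_pow_le_one (x := -1) (by norm_num)
  have hsymm : ∑' p : ℕ × ℕ, (-1) ^ p.2 * f p = ∑' p : ℕ × ℕ, (-1) ^ p.1 * f p := by
    rw [← (Equiv.prodComm ℕ ℕ).tsum_eq]
    simp only [Equiv.prodComm_apply, Prod.snd_swap, hswap]
  have hpoint (p : ℕ × ℕ) : (-1) ^ p.1 * f p + (-1) ^ p.2 * f p =
      f p + (-1) ^ (p.1 + p.2) * f p - 4 * {p : ℕ × ℕ | Odd p.1 ∧ Odd p.2}.indicator f p := by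
    rcases p with ⟨m, n⟩
    rcases m.even_or_odd with hm | hm <;> rcases n.even_or_odd with hn | hn <;>
      simp [hm.neg_one_pow, hn.neg_one_pow, pow_add, hm, hn]
    -- only the case `m`, `n` both odd is left
    ring
  have hfst := hf.mul_left_of_abs_le_one fun p ↦ hsign p.1
  have hsnd := hf.mul_left_of_abs_le_one fun p ↦ hsign p.2
  have hsum := hf.mul_left_of_abs_le_one fun p ↦ hsign (p.1 + p.2)
  calc 2 * ∑' p, (-1) ^ p.1 * f p = ∑' p, ((-1) ^ p.1 * f p + (-1) ^ p.2 * f p) := by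
        rw [hfst.tsum_add hsnd, hsymm, two_mul]
    _ = ∑' p, (f p + (-1) ^ (p.1 + p.2) * f p -
        4 * {p : ℕ × ℕ | Odd p.1 ∧ Odd p.2}.indicator f p) := tsum_congr hpoint
    _ = _ := by
      rw [(hf.add hsum).tsum_sub ((hf.indicator _).mul_left 4), hf.tsum_add hsum, tsum_mul_left,
        tsum_indicator_odd_odd]

theorem summable_one_div_mul_sqrt :
    Summable fun k : ℕ ↦ 1 / (((k : ℝ) + 1) * √((k : ℝ) + 1)) := by
  have h := (summable_nat_add_iff 1).mpr
    (Real.summable_one_div_nat_rpow.mpr (by norm_num : (1 : ℝ) < 3 / 2))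
  refine h.congr fun k ↦ ?_
  have hk : (0 : ℝ) < k + 1 := by positivity
  rw [Nat.cast_add_one, show (3 / 2 : ℝ) = 1 + 1 / 2 by norm_num, Real.rpow_add hk,
    Real.rpow_one, ← Real.sqrt_eq_rpow]

theorem summable_one_div_add_one_pow {p : ℕ} (hp : 1 < p) :
    Summable fun k : ℕ ↦ 1 / ((k : ℝ) + 1) ^ p := by
  simpa using (summable_nat_add_iff 1).mpr (Real.summable_one_div_nat_pow.mpr hp)

theorem harm_succ (p k : ℕ) : harm p (k + 1) = harm p k + 1 / ((k : ℝ) + 1) ^ p :=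
  sum_range_succ _ k

noncomputable def eulerKernel (p : ℕ × ℕ) : ℝ :=
  1 / (((p.1 : ℝ) + 1) * ((p.2 : ℝ) + 1) * ((p.1 : ℝ) + p.2 + 2))

theorem eulerKernel_nonneg (p : ℕ × ℕ) : 0 ≤ eulerKernel p := by
  unfold eulerKernel; positivity

theorem eulerKernel_swap (p : ℕ × ℕ) : eulerKernel p.swap = eulerKernel p := by
  simp only [eulerKernel, Prod.fst_swap, Prod.snd_swap]; ring_nf

theorem eulerKernel_odd_odd (p : ℕ × ℕ) :
    eulerKernel (2 * p.1 + 1, 2 * p.2 + 1) = eulerKernel p / 8 := by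
  simp only [eulerKernel]; push_cast; field_simp; ring

theorem eulerKernel_le_mul_sqrt (p : ℕ × ℕ) :
    eulerKernel p ≤ 1 / (((p.1 : ℝ) + 1) * √((p.1 : ℝ) + 1)) *
      (1 / (((p.2 : ℝ) + 1) * √((p.2 : ℝ) + 1))) := by
  set a : ℝ := p.1 + 1
  set b : ℝ := p.2 + 1
  have ha : 0 < a := by positivity
  have hb : 0 < b := by positivity
  have hsqrt : √a * √b ≤ a + b := by
    nlinarith [sq_nonneg (√a - √b), Real.sq_sqrt ha.le, Real.sq_sqrt hb.le]
  have hkernel : eulerKernel p = 1 / (a * b * (a + b)) := by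
    simp only [eulerKernel, a, b]; ring_nf
  rw [hkernel, one_div_mul_one_div, show a * √a * (b * √b) = a * b * (√a * √b) by ring]
  gcongr

theorem summable_eulerKernel : Summable eulerKernel :=
  .of_nonneg_of_le eulerKernel_nonneg eulerKernel_le_mul_sqrt
    (summable_one_div_mul_sqrt.mul_of_nonneg summable_one_div_mul_sqrt
      (fun _ ↦ by positivity) fun _ ↦ by positivity)

theorem hasSum_eulerKernel_row (m : ℕ) :
    HasSum (fun n ↦ eulerKernel (m, n)) (harm 1 (m + 1) / ((m : ℝ) + 1) ^ 2) := by
  have htele := hasSum_sub_add_of_antitone (f := fun n : ℕ ↦ 1 / ((n : ℝ) + 1))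
    (fun i j hij ↦ by dsimp only; gcongr) tendsto_one_div_add_atTop_nhds_zero_nat (m + 1)
  rw [show harm 1 (m + 1) = ∑ i ∈ range (m + 1), 1 / ((i : ℝ) + 1) by simp [harm]]
  refine (htele.div_const _).congr_fun fun n ↦ ?_
  simp only [eulerKernel]
  push_cast
  field_simp
  ring

theorem sum_antidiagonal_eulerKernel (s : ℕ) :
    ∑ p ∈ antidiagonal s, eulerKernel p = 2 * harm 1 (s + 1) / ((s : ℝ) + 2) ^ 2 := by
  have hsplit : ∀ p ∈ antidiagonal s, eulerKernel p =
      (1 / ((p.1 : ℝ) + 1) + 1 / ((p.2 : ℝ) + 1)) / ((s : ℝ) + 2) ^ 2 := by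
    intro p hp
    have hs : (p.1 : ℝ) + p.2 = s := by exact_mod_cast mem_antidiagonal.mp hp
    simp only [eulerKernel]
    rw [← hs]
    field_simp
    ring
  have hharm : ∑ p ∈ antidiagonal s, 1 / ((p.1 : ℝ) + 1) = harm 1 (s + 1) := by
    simp [harm, Nat.sum_antidiagonal_eq_sum_range_succ_mk]
  have hharm' : ∑ p ∈ antidiagonal s, 1 / ((p.2 : ℝ) + 1) = harm 1 (s + 1) := by
    rw [← hharm, ← Nat.sum_antidiagonal_swap]
    simp only [Prod.snd_swap]
  rw [sum_congr rfl hsplit, ← sum_div, sum_add_distrib, hharm, hharm']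
  ring

theorem hasSum_pow_mul_harm_div_sq {x : ℝ} (hx : |x| ≤ 1) :
    HasSum (fun k : ℕ ↦ x ^ k * harm 1 (k + 1) / ((k : ℝ) + 1) ^ 2)
      (∑' p : ℕ × ℕ, x ^ p.1 * eulerKernel p) :=
  (summable_eulerKernel.mul_left_of_abs_le_one fun p ↦ abs_pow_le_one hx p.1).hasSum
    |>.prod_fiberwise fun k ↦ by
      simpa only [mul_div_assoc] using (hasSum_eulerKernel_row k).mul_left (x ^ k)

theorem hasSum_pow_mul_two_mul_harm_div_sq {x : ℝ} (hx : |x| ≤ 1) :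
    HasSum (fun s : ℕ ↦ x ^ s * (2 * harm 1 (s + 1) / ((s : ℝ) + 2) ^ 2))
      (∑' p : ℕ × ℕ, x ^ (p.1 + p.2) * eulerKernel p) := by
  refine (summable_eulerKernel.mul_left_of_abs_le_one
    fun p ↦ abs_pow_le_one hx (p.1 + p.2)).hasSum.sum_antidiagonal.congr_fun fun s ↦ ?_
  rw [← sum_antidiagonal_eulerKernel, mul_sum]
  exact sum_congr rfl fun p hp ↦ by rw [mem_antidiagonal.mp hp]

theorem mul_tsum_pow_add_mul_eulerKernel {x : ℝ} (hx : |x| ≤ 1) :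
    x * ∑' p : ℕ × ℕ, x ^ (p.1 + p.2) * eulerKernel p =
      2 * (∑' p : ℕ × ℕ, x ^ p.1 * eulerKernel p - ∑' k : ℕ, x ^ k / ((k : ℝ) + 1) ^ 3) := by
  have hshift : HasSum (fun k : ℕ ↦ x ^ k * (2 * harm 1 k / ((k : ℝ) + 1) ^ 2))
      (x * ∑' p : ℕ × ℕ, x ^ (p.1 + p.2) * eulerKernel p) := by
    have hzero : x ^ 0 * (2 * harm 1 0 / (((0 : ℕ) : ℝ) + 1) ^ 2) = 0 := by simp [harm]
    rw [← hasSum_nat_add_iff' 1, sum_range_one, hzero, sub_zero]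
    refine ((hasSum_pow_mul_two_mul_harm_div_sq hx).mul_left x).congr_fun fun s ↦ ?_
    push_cast
    ring
  have hcube : Summable fun k : ℕ ↦ x ^ k / ((k : ℝ) + 1) ^ 3 := by
    simpa only [mul_one_div] using
      (summable_one_div_add_one_pow (by norm_num)).mul_left_of_abs_le_one (abs_pow_le_one hx)
  refine hshift.unique ((((hasSum_pow_mul_harm_div_sq hx).sub hcube.hasSum).mul_left 2).congr_fun
    fun k ↦ ?_)
  rw [harm_succ]
  field_simp
  ring

theorem tsum_neg_one_pow_div_add_one_pow_three :
    ∑' k : ℕ, (-1 : ℝ) ^ k / ((k : ℝ) + 1) ^ 3 = 3 / 4 * zetaVal 3 := by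
  have hodd : ∑' k : ℕ, 1 / (((2 * k + 1 : ℕ) : ℝ) + 1) ^ 3 = zetaVal 3 / 8 := by
    rw [zetaVal, ← tsum_div_const]
    exact tsum_congr fun k ↦ by push_cast; field_simp; ring
  simp only [div_eq_mul_one_div ((-1 : ℝ) ^ _)]
  rw [tsum_neg_one_pow_mul (summable_one_div_add_one_pow (by norm_num)), hodd, zetaVal]
  ring

theorem stmt10 : ∑' k : ℕ, (-1:ℝ)^k * harm 1 (k+1) / ((k:ℝ)+1)^2 = (5/8) * zetaVal 3 := by
  have hrow_neg_one := (hasSum_pow_mul_harm_div_sq (x := -1) (by norm_num)).tsum_eq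
  have hdiag_one := mul_tsum_pow_add_mul_eulerKernel (x := 1) (by norm_num)
  have hdiag_neg_one := mul_tsum_pow_add_mul_eulerKernel (x := -1) (by norm_num)
  have hsign := two_mul_tsum_neg_one_pow_fst_mul summable_eulerKernel eulerKernel_swap
  simp only [one_pow, one_mul] at hdiag_one
  simp only [eulerKernel_odd_odd, tsum_div_const] at hsign
  have heta := tsum_neg_one_pow_div_add_one_pow_three
  rw [zetaVal] at heta ⊢
  linarith
end

section
/- Li₃(1/2) = (7/8)ζ(3) − (1/12)π²ln(2) + (1/6)ln(2)³. -/
open MeasureTheory Real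

/-!
Termwise differentiation gives `Li_{m+1}' = Li_m / x`, and `Li₁(x) = -log (1 - x)`. Hence
`Li₂(x) + Li₂(1 - x) + log x log (1 - x)` has zero derivative on `(0, 1)`,
`Li₂(1 - 1/x) + Li₂(1 - x) + (log x)² / 2` has zero derivative on `(1/2, 1)`, and, by these two
dilogarithm identities, so does
`Li₃(x) + Li₃(1 - x) + Li₃(1 - 1/x) - (log x)³/6 - π²/6 log x + (log x)² log (1 - x) / 2`.
All three are continuous up to `x = 1`, where they equal `ζ(2) = π²/6`, `0` and `ζ(3)`.
At `x = 1/2` the last identity reads `2 Li₃(1/2) + Li₃(-1) = ζ(3) + (log 2)³/3 - π²/6 log 2`,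
and `Li₃(-1) = -(3/4) ζ(3)` by splitting the series into its even and odd terms.
-/

open Filter Topology Set

theorem summable_one_div_succ_pow {m : ℕ} (hm : 2 ≤ m) :
    Summable fun k : ℕ => 1 / ((k : ℝ) + 1) ^ m := by
  have := (summable_nat_add_iff 1).mpr (Real.summable_one_div_nat_pow.mpr (by omega : 1 < m))
  simpa using this

theorem polylog_zero_right (m : ℕ) : polylog m 0 = 0 := by
  simp [polylog]

theorem polylog_one_right (m : ℕ) : polylog m 1 = zetaVal m := by
  simp [polylog, zetaVal]

theorem zetaVal_two : zetaVal 2 = π ^ 2 / 6 := by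
  have := (hasSum_nat_add_iff' 1).mpr hasSum_zeta_two
  simpa [zetaVal] using this.tsum_eq

theorem polylog_one_eq_neg_log {x : ℝ} (hx : |x| < 1) : polylog 1 x = -log (1 - x) := by
  simpa [polylog] using (hasSum_pow_div_log_of_abs_lt_one hx).tsum_eq

theorem polylog_neg_one_right {m : ℕ} (hm : 2 ≤ m) :
    polylog m (-1) = (2 / 2 ^ m - 1) * zetaVal m := by
  set g : ℕ → ℝ := fun k => 1 / ((k : ℝ) + 1) ^ m
  have hg : HasSum g (zetaVal m) := (summable_one_div_succ_pow hm).hasSum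
  have hodd : HasSum (fun j => g (2 * j + 1)) (zetaVal m / 2 ^ m) := by
    refine (hg.div_const (2 ^ m)).congr_fun fun j => ?_
    simp only [g]
    push_cast
    rw [show 2 * (j : ℝ) + 1 + 1 = 2 * (j + 1) by ring, mul_pow, div_div, mul_comm]
  have heven : HasSum (fun j => g (2 * j)) (zetaVal m - zetaVal m / 2 ^ m) := by
    obtain ⟨E, hE⟩ := hg.summable.comp_injective (mul_right_injective₀ two_ne_zero)
    replace hE : HasSum (fun j => g (2 * j)) E := hE
    convert hE using 1
    linarith [(hE.even_add_odd hodd).unique hg]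
  have hsigned : HasSum (fun k => (-1) ^ (k + 1) * g k)
      (-(zetaVal m - zetaVal m / 2 ^ m) + zetaVal m / 2 ^ m) :=
    (heven.neg.congr_fun fun j => by simp [pow_succ]).even_add_odd
      (hodd.congr_fun fun j => by simp [pow_succ])
  rw [polylog, show (2 / 2 ^ m - 1) * zetaVal m =
    -(zetaVal m - zetaVal m / 2 ^ m) + zetaVal m / 2 ^ m by ring, ← hsigned.tsum_eq]
  simp [g, div_eq_mul_inv]

theorem continuousOn_polylog {m : ℕ} (hm : 2 ≤ m) : ContinuousOn (polylog m) (Icc (-1) 1) := by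
  refine continuousOn_tsum (fun k => (continuous_pow (k + 1)).continuousOn.div_const _)
    (summable_one_div_succ_pow hm) fun k x hx => ?_
  rw [norm_div, norm_pow, Real.norm_of_nonneg (by positivity : (0 : ℝ) ≤ ((k : ℝ) + 1) ^ m)]
  gcongr
  exact pow_le_one₀ (norm_nonneg x) (abs_le.2 hx)

theorem hasDerivAt_polylog_succ (m : ℕ) {x : ℝ} (hx : |x| < 1) (hx0 : x ≠ 0) :
    HasDerivAt (polylog (m + 1)) (polylog m x / x) x := by
  obtain ⟨r, hxr, hr1⟩ := exists_between hx
  have key := hasDerivAt_tsum_of_isPreconnected (t := Ioo (-r) r) (y₀ := 0) (y := x)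
    (g := fun (k : ℕ) (y : ℝ) => y ^ (k + 1) / ((k : ℝ) + 1) ^ (m + 1))
    (g' := fun (k : ℕ) (y : ℝ) => y ^ k / ((k : ℝ) + 1) ^ m)
    (summable_geometric_of_lt_one ((abs_nonneg x).trans hxr.le) hr1) isOpen_Ioo
    (convex_Ioo _ _).isPreconnected
    (fun k y _ => ((hasDerivAt_pow (k + 1) y).div_const _).congr_deriv (by
      rw [Nat.add_sub_cancel]; push_cast; field_simp; ring))
    (fun k y hy => ?_) (by simp only [mem_Ioo]; constructor <;> linarith [abs_nonneg x])
    (by simp [summable_zero]) (abs_lt.1 hxr)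
  · have hsum : polylog m x / x = ∑' k : ℕ, x ^ k / ((k : ℝ) + 1) ^ m := by
      rw [polylog, ← tsum_div_const]
      congr 1 with k
      field_simp
      ring
    rw [hsum]
    exact key
  · rw [norm_div, norm_pow,
      Real.norm_of_nonneg (by positivity : (0 : ℝ) ≤ ((k : ℝ) + 1) ^ m)]
    calc ‖y‖ ^ k / ((k : ℝ) + 1) ^ m ≤ ‖y‖ ^ k :=
          div_le_self (by positivity) (one_le_pow₀ (by linarith [k.cast_nonneg (α := ℝ)]))
      _ ≤ r ^ k := pow_le_pow_left₀ (norm_nonneg y) (abs_lt.2 hy).le k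

theorem HasDerivAt.polylog_succ {m : ℕ} {g : ℝ → ℝ} {g' y : ℝ} (hg : HasDerivAt g g' y)
    (h1 : |g y| < 1) (h0 : g y ≠ 0) :
    HasDerivAt (fun t => polylog (m + 1) (g t)) (polylog m (g y) / g y * g') y :=
  (hasDerivAt_polylog_succ m h1 h0).comp y hg

-- Continuous on all of `ℝ` because `log 0 = 0`; near `0` it is `(y log y) * (log (1 - y) / y)`.
theorem continuous_log_mul_log_one_sub : Continuous fun y : ℝ => log y * log (1 - y) := by
  have h0 : ContinuousAt (fun y : ℝ => log y * log (1 - y)) 0 := by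
    have hslope : Tendsto (fun t : ℝ => t⁻¹ * log (1 - t)) (𝓝[≠] 0) (𝓝 (-1)) := by
      have := hasDerivAt_iff_tendsto_slope_zero.mp
        (((hasDerivAt_id (0 : ℝ)).const_sub 1).log (by norm_num))
      simpa using this
    have hlim := ((continuous_mul_log.tendsto 0).mono_left nhdsWithin_le_nhds).mul hslope
    rw [← continuousWithinAt_compl_self, ContinuousWithinAt]
    simp only [log_zero, zero_mul, mul_zero] at hlim ⊢
    refine hlim.congr' ?_
    filter_upwards [self_mem_nhdsWithin] with t (ht : t ≠ 0)
    field_simp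
  have h1 : ContinuousAt (fun y : ℝ => log y * log (1 - y)) 1 := by
    have := h0.comp_of_eq (continuous_sub_left (1 : ℝ)).continuousAt (sub_self 1)
    simpa [Function.comp_def, mul_comm] using this
  refine continuous_iff_continuousAt.2 fun y => ?_
  rcases eq_or_ne y 0 with rfl | hy0
  · exact h0
  rcases eq_or_ne y 1 with rfl | hy1
  · exact h1
  exact (continuousAt_log hy0).mul
    ((continuousAt_log (sub_ne_zero.2 hy1.symm)).comp (continuous_sub_left 1).continuousAt)

theorem eq_right_of_hasDerivAt_zero {f : ℝ → ℝ} {a b x : ℝ} (hf : ContinuousOn f (Icc a b))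
    (hf' : ∀ y ∈ Ioo a b, HasDerivAt f 0 y) (hx : x ∈ Icc a b) : f x = f b := by
  rcases hx.2.eq_or_lt with rfl | hxb
  · rfl
  obtain ⟨c, -, hc⟩ := exists_hasDerivAt_eq_slope f (fun _ => 0) hxb
    (hf.mono (Icc_subset_Icc_left hx.1)) fun c hc => hf' c ⟨hx.1.trans_lt hc.1, hc.2⟩
  rw [eq_comm, div_eq_zero_iff, sub_eq_zero] at hc
  exact (hc.resolve_right (sub_ne_zero.2 hxb.ne')).symm

theorem one_sub_inv_mem_Icc {y : ℝ} (hy : y ∈ Icc (1 / 2) 1) : 1 - y⁻¹ ∈ Icc (-1) 0 := by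
  have hy0 : 0 < y := by linarith [hy.1]
  rw [mem_Icc, neg_le_sub_iff_le_add, sub_nonpos, one_le_inv₀ hy0,
    inv_le_comm₀ hy0 (by norm_num)]
  constructor <;> linarith [hy.1, hy.2]

theorem one_sub_inv_mem_Ioo {y : ℝ} (hy : y ∈ Ioo (1 / 2) 1) : 1 - y⁻¹ ∈ Ioo (-1) 0 := by
  have hy0 : 0 < y := by linarith [hy.1]
  rw [mem_Ioo, neg_lt_sub_iff_lt_add, sub_neg, one_lt_inv₀ hy0, inv_lt_comm₀ hy0 (by norm_num)]
  constructor <;> linarith [hy.1, hy.2]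

theorem polylog_two_add_polylog_two_one_sub {x : ℝ} (hx : x ∈ Icc 0 1) :
    polylog 2 x + polylog 2 (1 - x) = π ^ 2 / 6 - log x * log (1 - x) := by
  have hcont : ContinuousOn (fun y => polylog 2 y + polylog 2 (1 - y) + log y * log (1 - y))
      (Icc 0 1) := by
    refine ContinuousOn.add (.add ?_ ?_) continuous_log_mul_log_one_sub.continuousOn
    · exact (continuousOn_polylog le_rfl).mono (Icc_subset_Icc (by norm_num) le_rfl)
    · exact (continuousOn_polylog le_rfl).comp (continuous_sub_left 1).continuousOn
        fun y hy => ⟨by linarith [hy.2], by linarith [hy.1]⟩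
  have hderiv : ∀ y ∈ Ioo (0 : ℝ) 1,
      HasDerivAt (fun y => polylog 2 y + polylog 2 (1 - y) + log y * log (1 - y)) 0 y := by
    rintro y ⟨hy0, hy1⟩
    have hsub := (hasDerivAt_id' y).const_sub 1
    have hy : |y| < 1 := abs_lt.2 ⟨by linarith, hy1⟩
    have hy' : |1 - y| < 1 := abs_lt.2 ⟨by linarith, by linarith⟩
    have := (((hasDerivAt_id' y).polylog_succ (m := 1) hy hy0.ne').add
      (hsub.polylog_succ (m := 1) hy' (by linarith))).add
      ((hasDerivAt_log hy0.ne').mul (hsub.log (by linarith)))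
    refine this.congr_deriv ?_
    rw [polylog_one_eq_neg_log hy, polylog_one_eq_neg_log hy', sub_sub_cancel]
    field_simp
    ring
  have := eq_right_of_hasDerivAt_zero hcont hderiv hx
  simp only [sub_self, polylog_zero_right, polylog_one_right, zetaVal_two, log_one] at this
  linarith

theorem polylog_two_one_sub_inv {x : ℝ} (hx : x ∈ Icc (1 / 2) 1) :
    polylog 2 (1 - x⁻¹) = -polylog 2 (1 - x) - log x ^ 2 / 2 := by
  have hcont : ContinuousOn (fun y => polylog 2 (1 - y⁻¹) + polylog 2 (1 - y) + log y ^ 2 / 2)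
      (Icc (1 / 2) 1) := by
    have hpos : ∀ y ∈ Icc (1 / 2 : ℝ) 1, y ≠ 0 := fun y hy => by linarith [hy.1]
    refine ContinuousOn.add (.add ?_ ?_) ((continuousOn_log.mono fun y hy => hpos y hy).pow 2
      |>.div_const 2)
    · exact (continuousOn_polylog le_rfl).comp
        (continuousOn_const.sub (continuousOn_inv₀.mono fun y hy => hpos y hy))
        fun y hy => Icc_subset_Icc le_rfl zero_le_one (one_sub_inv_mem_Icc hy)
    · exact (continuousOn_polylog le_rfl).comp (continuous_sub_left 1).continuousOn
        fun y hy => ⟨by linarith [hy.2], by linarith [hy.1]⟩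
  have hderiv : ∀ y ∈ Ioo (1 / 2 : ℝ) 1,
      HasDerivAt (fun y => polylog 2 (1 - y⁻¹) + polylog 2 (1 - y) + log y ^ 2 / 2) 0 y := by
    intro y hy
    obtain ⟨hy0, hy1⟩ : 0 < y ∧ y < 1 := ⟨by linarith [hy.1], hy.2⟩
    obtain ⟨hz1, hz0⟩ := one_sub_inv_mem_Ioo hy
    have hz : |1 - y⁻¹| < 1 := abs_lt.2 ⟨hz1, by linarith⟩
    have hy' : |1 - y| < 1 := abs_lt.2 ⟨by linarith, by linarith⟩
    have := ((((hasDerivAt_inv hy0.ne').const_sub 1).polylog_succ (m := 1) hz hz0.ne).add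
      (((hasDerivAt_id' y).const_sub 1).polylog_succ (m := 1) hy' (by linarith))).add
      (((hasDerivAt_log hy0.ne').pow 2).div_const 2)
    refine this.congr_deriv ?_
    rw [polylog_one_eq_neg_log hz, polylog_one_eq_neg_log hy', sub_sub_cancel, sub_sub_cancel,
      log_inv]
    have h1y : 1 - y ≠ 0 := (sub_pos.2 hy1).ne'
    have hy1' : y - 1 ≠ 0 := (sub_neg.2 hy1).ne
    field_simp
    ring
  have := eq_right_of_hasDerivAt_zero hcont hderiv hx
  simp only [inv_one, sub_self, polylog_zero_right, log_one] at this
  linarith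

theorem polylog_three_functional_eq {x : ℝ} (hx : x ∈ Icc (1 / 2) 1) :
    polylog 3 x + polylog 3 (1 - x) + polylog 3 (1 - x⁻¹) =
      zetaVal 3 + log x ^ 3 / 6 + π ^ 2 / 6 * log x - log x ^ 2 * log (1 - x) / 2 := by
  set G : ℝ → ℝ := fun y => polylog 3 y + polylog 3 (1 - y) + polylog 3 (1 - y⁻¹)
    - log y ^ 3 / 6 - π ^ 2 / 6 * log y + log y ^ 2 * log (1 - y) / 2
  have hcont : ContinuousOn G (Icc (1 / 2) 1) := by
    have hpos : ∀ y ∈ Icc (1 / 2 : ℝ) 1, y ≠ 0 := fun y hy => by linarith [hy.1]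
    have hlog : ContinuousOn log (Icc (1 / 2) 1) := continuousOn_log.mono fun y hy => hpos y hy
    refine ContinuousOn.add (.sub (.sub (.add (.add ?_ ?_) ?_) ((hlog.pow 3).div_const 6))
      (continuousOn_const.mul hlog)) ?_
    · exact (continuousOn_polylog (by norm_num)).mono (Icc_subset_Icc (by norm_num) le_rfl)
    · exact (continuousOn_polylog (by norm_num)).comp (continuous_sub_left 1).continuousOn
        fun y hy => ⟨by linarith [hy.2], by linarith [hy.1]⟩
    · exact (continuousOn_polylog (by norm_num)).comp
        (continuousOn_const.sub (continuousOn_inv₀.mono fun y hy => hpos y hy))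
        fun y hy => Icc_subset_Icc le_rfl zero_le_one (one_sub_inv_mem_Icc hy)
    · refine ((hlog.mul continuous_log_mul_log_one_sub.continuousOn).div_const 2).congr
        fun y _ => ?_
      simp only [Pi.mul_apply]
      ring
  have hderiv : ∀ y ∈ Ioo (1 / 2 : ℝ) 1, HasDerivAt G 0 y := by
    intro y hy
    obtain ⟨hy0, hy1⟩ : 0 < y ∧ y < 1 := ⟨by linarith [hy.1], hy.2⟩
    obtain ⟨hz1, hz0⟩ := one_sub_inv_mem_Ioo hy
    have hyabs : |y| < 1 := abs_lt.2 ⟨by linarith, hy1⟩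
    have hz : |1 - y⁻¹| < 1 := abs_lt.2 ⟨hz1, by linarith⟩
    have hy' : |1 - y| < 1 := abs_lt.2 ⟨by linarith, by linarith⟩
    have hsub := (hasDerivAt_id' y).const_sub 1
    have hlog := hasDerivAt_log hy0.ne'
    have := (((((((hasDerivAt_id' y).polylog_succ (m := 2) hyabs hy0.ne').add
      (hsub.polylog_succ (m := 2) hy' (by linarith))).add
      (((hasDerivAt_inv hy0.ne').const_sub 1).polylog_succ (m := 2) hz hz0.ne)).sub
      ((hlog.pow 3).div_const 6)).sub (hlog.const_mul (π ^ 2 / 6))).add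
      (((hlog.pow 2).mul (hsub.log (by linarith))).div_const 2))
    refine this.congr_deriv ?_
    rw [polylog_two_one_sub_inv ⟨hy.1.le, hy1.le⟩,
      eq_sub_of_add_eq (polylog_two_add_polylog_two_one_sub ⟨hy0.le, hy1.le⟩)]
    have h1y : 1 - y ≠ 0 := (sub_pos.2 hy1).ne'
    have hy1' : y - 1 ≠ 0 := (sub_neg.2 hy1).ne
    simp only [Pi.pow_apply]
    field_simp
    ring
  have := eq_right_of_hasDerivAt_zero hcont hderiv hx
  simp only [G, inv_one, sub_self, polylog_zero_right, polylog_one_right, log_one] at this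
  linarith

theorem stmt16 : polylog 3 (1/2) = (7/8) * zetaVal 3 - (1/12) * π^2 * Real.log 2 + (1/6) * (Real.log 2)^3 := by
  have h := polylog_three_functional_eq (x := 1 / 2) ⟨le_rfl, by norm_num⟩
  rw [show (1 : ℝ) - 1 / 2 = 1 / 2 by norm_num, show (1 : ℝ) - (1 / 2)⁻¹ = -1 by norm_num,
    polylog_neg_one_right (by norm_num), show log (1 / 2) = -log 2 by rw [one_div, log_inv]] at h
  linear_combination h / 2
end

section
/- For I(n) := ∫₀¹ (x^n + (1−x)^n)^{1/n} dx, the limit of I(n) as n → ∞ equals 3/4. -/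
/-!
For `0 ≤ x ≤ 1` the integrand is squeezed between `max x (1 - x)` and `2 ^ (1 / n) * max x (1 - x)`
(the `ℓⁿ` norm of `(x, 1 - x)` lies between its `ℓ^∞` norm and `2 ^ (1 / n)` times it). Since
`∫₀¹ max x (1 - x) dx = 3 / 4` and `2 ^ (1 / n) → 1`, the integrals tend to `3 / 4`.
-/

open MeasureTheory Real

noncomputable def Ifun (n : ℕ) : ℝ := ∫ x in (0:ℝ)..1, (x ^ n + (1 - x) ^ n) ^ ((1:ℝ) / n)

open Filter Topology Set

theorem max_le_pow_add_pow_rpow_one_div {a b : ℝ} (ha : 0 ≤ a) (hb : 0 ≤ b) {n : ℕ} (hn : n ≠ 0) :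
    max a b ≤ (a ^ n + b ^ n) ^ ((1 : ℝ) / n) := by
  have hn' : (0 : ℝ) < n := by positivity
  rw [one_div, max_le_iff, le_rpow_inv_iff_of_pos ha (by positivity) hn',
    le_rpow_inv_iff_of_pos hb (by positivity) hn', rpow_natCast, rpow_natCast]
  constructor <;> linarith [pow_nonneg ha n, pow_nonneg hb n]

theorem pow_add_pow_rpow_one_div_le {a b : ℝ} (ha : 0 ≤ a) (hb : 0 ≤ b) {n : ℕ} (hn : n ≠ 0) :
    (a ^ n + b ^ n) ^ ((1 : ℝ) / n) ≤ 2 ^ ((1 : ℝ) / n) * max a b := by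
  have hmax : 0 ≤ max a b := ha.trans (le_max_left a b)
  calc (a ^ n + b ^ n) ^ ((1 : ℝ) / n)
      ≤ (2 * max a b ^ n) ^ ((1 : ℝ) / n) := by
        rw [two_mul]
        gcongr
        exacts [le_max_left a b, le_max_right a b]
    _ = 2 ^ ((1 : ℝ) / n) * max a b := by
        rw [mul_rpow zero_le_two (by positivity), one_div, pow_rpow_inv_natCast hmax hn]

theorem continuous_pow_add_one_sub_pow_rpow (n : ℕ) (p : ℝ) (hp : 0 ≤ p) :
    Continuous fun x : ℝ => (x ^ n + (1 - x) ^ n) ^ p :=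
  (by fun_prop : Continuous fun x : ℝ => x ^ n + (1 - x) ^ n).rpow_const fun _ => Or.inr hp

theorem integral_max_self_one_sub : ∫ x in (0:ℝ)..1, max x (1 - x) = 3 / 4 := by
  have hcont : Continuous fun x : ℝ => max x (1 - x) := by fun_prop
  rw [← intervalIntegral.integral_add_adjacent_intervals (b := 1 / 2)
    (hcont.intervalIntegrable _ _) (hcont.intervalIntegrable _ _)]
  have hleft : ∫ x in (0:ℝ)..1 / 2, max x (1 - x) = ∫ x in (0:ℝ)..1 / 2, (1 - x) :=
    intervalIntegral.integral_congr fun x hx => by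
      rw [uIcc_of_le (by norm_num)] at hx
      exact max_eq_right (by linarith [hx.2])
  have hright : ∫ x in (1 / 2:ℝ)..1, max x (1 - x) = ∫ x in (1 / 2:ℝ)..1, x :=
    intervalIntegral.integral_congr fun x hx => by
      rw [uIcc_of_le (by norm_num)] at hx
      exact max_eq_left (by linarith [hx.1])
  rw [hleft, hright, intervalIntegral.integral_sub intervalIntegrable_const
    intervalIntegral.intervalIntegrable_id]
  norm_num [integral_id]

theorem three_quarters_le_Ifun {n : ℕ} (hn : n ≠ 0) : 3 / 4 ≤ Ifun n := by
  rw [← integral_max_self_one_sub]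
  refine intervalIntegral.integral_mono_on zero_le_one
    ((by fun_prop : Continuous fun x : ℝ => max x (1 - x)).intervalIntegrable 0 1)
    ((continuous_pow_add_one_sub_pow_rpow n _ (by positivity)).intervalIntegrable 0 1)
    fun x hx => ?_
  exact max_le_pow_add_pow_rpow_one_div hx.1 (sub_nonneg.2 hx.2) hn

theorem Ifun_le {n : ℕ} (hn : n ≠ 0) : Ifun n ≤ 2 ^ ((1 : ℝ) / n) * (3 / 4) := by
  rw [← integral_max_self_one_sub, ← intervalIntegral.integral_const_mul]
  refine intervalIntegral.integral_mono_on zero_le_one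
    ((continuous_pow_add_one_sub_pow_rpow n _ (by positivity)).intervalIntegrable 0 1)
    ((by fun_prop : Continuous fun x : ℝ => 2 ^ ((1 : ℝ) / n) * max x (1 - x)).intervalIntegrable
      0 1) fun x hx => ?_
  exact pow_add_pow_rpow_one_div_le hx.1 (sub_nonneg.2 hx.2) hn

theorem stmt17 : Filter.Tendsto (fun n : ℕ => Ifun n) Filter.atTop (nhds (3/4)) := by
  have hupper : Tendsto (fun n : ℕ => (2 : ℝ) ^ ((1 : ℝ) / n) * (3 / 4)) atTop (𝓝 (3 / 4)) := by
    simpa using ((tendsto_const_nhds (x := (2 : ℝ))).rpow tendsto_one_div_atTop_nhds_zero_nat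
      (Or.inl two_ne_zero)).mul_const (3 / 4 : ℝ)
  refine tendsto_of_tendsto_of_tendsto_of_le_of_le' tendsto_const_nhds hupper ?_ ?_ <;>
    filter_upwards [eventually_ne_atTop 0] with n hn
  exacts [three_quarters_le_Ifun hn, Ifun_le hn]
end

section
/- For I(n) := ∫₀¹ (x^n + (1−x)^n)^{1/n} dx, the limit of n²·(I(n) − 3/4) as n → ∞ equals π²/48. -/
open MeasureTheory Real

/-!
By the symmetry `x ↦ 1 - x`, `I(n) - 3/4 = 2 ∫_{1/2}^1 ((x^n + (1-x)^n)^(1/n) - x) dx`. The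
substitution `x = 1 / (1 + t^(1/n))` turns `n² (I(n) - 3/4)` into `∫₀¹ K(1/n, t) dt` with
`K(c, t) = 2 ((1+t)^c - 1)/c · t^(c-1) / (1 + t^c)³`. For `0 < c ≤ 1` Bernoulli's inequality gives
`0 ≤ K(c, t) ≤ 2`, and `K(c, t) → log(1+t) / (4t)` as `c → 0⁺`, so by dominated convergence the
limit is `¼ ∫₀¹ log(1+t)/t dt = ¼ ∑ (-1)^k/(k+1)² = π²/48`.
-/

open Set Filter Topology

theorem integral_zero_one_eq_two_mul_of_symm {f : ℝ → ℝ} (hf : Continuous f)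
    (hsymm : ∀ x, f (1 - x) = f x) :
    ∫ x in (0 : ℝ)..1, f x = 2 * ∫ x in (1 / 2 : ℝ)..1, f x := by
  have h := intervalIntegral.integral_comp_sub_left (a := 1 / 2) (b := 1) f 1
  norm_num [hsymm] at h
  rw [← intervalIntegral.integral_add_adjacent_intervals (b := 1 / 2)
    (hf.intervalIntegrable _ _) (hf.intervalIntegrable _ _), ← h]
  ring

theorem integral_half_one_eq_integral_comp_inv_one_add {G : ℝ → ℝ} (hG : Continuous G) :
    ∫ x in (1 / 2 : ℝ)..1, G x = ∫ s in (0 : ℝ)..1, G (1 + s)⁻¹ / (1 + s) ^ 2 := by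
  have hderiv : ∀ s ∈ uIcc (0 : ℝ) 1,
      HasDerivAt (fun s => (1 + s)⁻¹) (-((1 + s) ^ 2)⁻¹) s := fun s hs => by
    have hs : 0 ≤ s := by simpa using hs.1
    simpa [neg_div] using ((hasDerivAt_id s).const_add 1).fun_inv (by positivity)
  have hcont : ContinuousOn (fun s : ℝ => -((1 + s) ^ 2)⁻¹) (uIcc 0 1) := by
    refine (ContinuousOn.inv₀ (by fun_prop) fun s hs => ?_).neg
    have hs : 0 ≤ s := by simpa using hs.1
    positivity
  have h := intervalIntegral.integral_comp_mul_deriv hderiv hcont hG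
  norm_num at h
  rw [intervalIntegral.integral_symm, ← h, ← intervalIntegral.integral_neg]
  simp [div_eq_mul_inv]

theorem integral_comp_rpow_Ioo_zero_one_of_pos {E : Type*} [NormedAddCommGroup E]
    [NormedSpace ℝ E] (g : ℝ → E) {p : ℝ} (hp : 0 < p) :
    ∫ x in Ioo (0 : ℝ) 1, (p * x ^ (p - 1)) • g (x ^ p) = ∫ y in Ioo (0 : ℝ) 1, g y := by
  have h := integral_comp_rpow_Ioi_of_pos (g := (Iio 1).indicator g) hp
  rw [setIntegral_indicator measurableSet_Iio, Ioi_inter_Iio] at h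
  rw [← h, ← Ioi_inter_Iio, ← setIntegral_indicator measurableSet_Iio]
  refine setIntegral_congr_fun measurableSet_Ioi fun x (hx : 0 < x) => ?_
  have hlt : x ^ p < 1 ↔ x < 1 := by simpa using rpow_lt_rpow_iff hx.le zero_le_one hp
  by_cases hx1 : x < 1 <;> simp [indicator, hx1, hlt]

theorem tendsto_rpow_sub_one_div {a : ℝ} (ha : 0 < a) :
    Tendsto (fun c => (a ^ c - 1) / c) (𝓝[≠] 0) (𝓝 (log a)) := by
  simpa [div_eq_inv_mul] using (hasStrictDerivAt_const_rpow ha 0).hasDerivAt.tendsto_slope_zero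

theorem hasSum_one_div_succ_sq : HasSum (fun k : ℕ => 1 / ((k : ℝ) + 1) ^ 2) (π ^ 2 / 6) := by
  have h := (hasSum_nat_add_iff (f := fun n : ℕ => 1 / (n : ℝ) ^ 2) 1).2
    (by simpa using hasSum_zeta_two)
  simpa using h

theorem hasSum_neg_one_pow_div_succ_sq :
    HasSum (fun k : ℕ => (-1) ^ k / ((k : ℝ) + 1) ^ 2) (π ^ 2 / 12) := by
  set f : ℕ → ℝ := fun k => 1 / ((k : ℝ) + 1) ^ 2
  have hodd : HasSum (fun m => f (2 * m + 1)) (π ^ 2 / 24) := by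
    have h := hasSum_one_div_succ_sq.mul_left (1 / 4)
    rw [show 1 / 4 * (π ^ 2 / 6) = π ^ 2 / 24 by ring] at h
    refine h.congr_fun fun m => ?_
    simp only [f]; push_cast; field_simp; ring
  have heven : HasSum (fun m => f (2 * m)) (π ^ 2 / 8) := by
    have h : HasSum (fun m => f (2 * m)) (∑' m, f (2 * m)) :=
      (hasSum_one_div_succ_sq.summable.comp_injective
        (mul_right_injective₀ (two_ne_zero' ℕ))).hasSum
    convert h using 1
    linarith [hasSum_one_div_succ_sq.unique (h.even_add_odd hodd)]
  convert HasSum.even_add_odd (f := fun k : ℕ => (-1) ^ k / ((k : ℝ) + 1) ^ 2)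
    (heven.congr_fun fun m => ?_) (hodd.neg.congr_fun fun m => ?_) using 1
  · ring
  · simp [f, pow_mul]
  · simp [f, pow_succ, pow_mul, neg_div]

theorem hasSum_log_one_add_div_self {t : ℝ} (ht : t ≠ 0) (ht1 : |t| < 1) :
    HasSum (fun k : ℕ => (-t) ^ k / (k + 1)) (log (1 + t) / t) := by
  have h := (hasSum_pow_div_log_of_abs_lt_one (x := -t) (by rwa [abs_neg])).div_const (-t)
  rw [sub_neg_eq_add, neg_div_neg_eq] at h
  refine h.congr_fun fun k => ?_
  rw [pow_succ]
  field_simp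

theorem setIntegral_Ioo_zero_one_pow (k : ℕ) : ∫ t in Ioo (0 : ℝ) 1, t ^ k = 1 / (k + 1) := by
  rw [← integral_Ioc_eq_integral_Ioo, ← intervalIntegral.integral_of_le zero_le_one]
  simp [integral_pow]

theorem setIntegral_Ioo_zero_one_log_one_add_div_self :
    ∫ t in Ioo (0 : ℝ) 1, log (1 + t) / t = π ^ 2 / 12 := by
  set F : ℕ → ℝ → ℝ := fun k t => (-t) ^ k / (k + 1)
  have hint : ∀ k, Integrable (F k) (volume.restrict (Ioo 0 1)) := fun k =>
    (by fun_prop : Continuous (F k)).integrableOn_Icc.mono_set Ioo_subset_Icc_self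
  have hF : ∀ k, ∫ t in Ioo (0 : ℝ) 1, F k t = (-1) ^ k / ((k : ℝ) + 1) ^ 2 := fun k => by
    have h : F k = fun t => (-1) ^ k / ((k : ℝ) + 1) * t ^ k := funext fun t => by
      simp only [F]; rw [neg_pow]; ring
    rw [h, integral_const_mul, setIntegral_Ioo_zero_one_pow]
    field_simp
  have hnorm : ∀ k, ∫ t in Ioo (0 : ℝ) 1, ‖F k t‖ = 1 / ((k : ℝ) + 1) ^ 2 := fun k => by
    have h : ∀ t ∈ Ioo (0 : ℝ) 1, ‖F k t‖ = t ^ k / (k + 1) := fun t ht => by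
      simp [F, abs_of_pos ht.1, abs_of_pos (Nat.cast_add_one_pos (α := ℝ) k)]
    rw [setIntegral_congr_fun measurableSet_Ioo h, integral_div, setIntegral_Ioo_zero_one_pow]
    field_simp
  have key := integral_tsum_of_summable_integral_norm hint
    (by simpa only [hnorm] using hasSum_one_div_succ_sq.summable)
  rw [setIntegral_congr_fun measurableSet_Ioo fun t ht =>
    (hasSum_log_one_add_div_self ht.1.ne' (by rw [abs_of_pos ht.1]; exact ht.2)).tsum_eq.symm,
    ← key, tsum_congr hF, hasSum_neg_one_pow_div_succ_sq.tsum_eq]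

noncomputable def ellNorm (n : ℕ) (x : ℝ) : ℝ := (x ^ n + (1 - x) ^ n) ^ ((1 : ℝ) / n)

theorem continuous_ellNorm (n : ℕ) : Continuous (ellNorm n) :=
  (by fun_prop : Continuous fun x : ℝ => x ^ n + (1 - x) ^ n).rpow_const fun _ =>
    Or.inr (by positivity)

theorem ellNorm_one_sub (n : ℕ) (x : ℝ) : ellNorm n (1 - x) = ellNorm n x := by
  simp only [ellNorm, sub_sub_cancel, add_comm]

theorem ellNorm_inv_one_add {n : ℕ} (hn : n ≠ 0) {s : ℝ} (hs : 0 ≤ s) :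
    ellNorm n (1 + s)⁻¹ = (1 + s ^ n) ^ ((1 : ℝ) / n) / (1 + s) := by
  have hs1 : 0 < 1 + s := by positivity
  have h : (1 + s)⁻¹ ^ n + (1 - (1 + s)⁻¹) ^ n = (1 + s ^ n) / (1 + s) ^ n := by
    rw [show 1 - (1 + s)⁻¹ = s / (1 + s) by field_simp; ring]
    rw [div_pow, inv_pow, add_div, one_div]
  rw [ellNorm, h, div_rpow (by positivity) (by positivity), one_div,
    pow_rpow_inv_natCast hs1.le hn]

noncomputable def defectKernel (c t : ℝ) : ℝ :=
  2 * (((1 + t) ^ c - 1) / c) * t ^ (c - 1) / (1 + t ^ c) ^ 3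

theorem Ifun_sub_three_div_four {n : ℕ} (hn : n ≠ 0) :
    Ifun n - 3 / 4 = 2 * ∫ s in Ioo (0 : ℝ) 1, ((1 + s ^ n) ^ ((1 : ℝ) / n) - 1) / (1 + s) ^ 3 := by
  have hG : Continuous fun x => ellNorm n x - x := (continuous_ellNorm n).sub continuous_id
  have hsymm := integral_zero_one_eq_two_mul_of_symm (continuous_ellNorm n) (ellNorm_one_sub n)
  have hid : ∫ x in (1 / 2 : ℝ)..1, x = 3 / 8 := by norm_num [integral_id]
  have hsub := intervalIntegral.integral_sub
    ((continuous_ellNorm n).intervalIntegrable (μ := volume) (1 / 2) 1)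
    intervalIntegral.intervalIntegrable_id
  rw [integral_half_one_eq_integral_comp_inv_one_add hG, hid] at hsub
  have hpt : ∀ s ∈ Ioo (0 : ℝ) 1, (ellNorm n (1 + s)⁻¹ - (1 + s)⁻¹) / (1 + s) ^ 2
      = ((1 + s ^ n) ^ ((1 : ℝ) / n) - 1) / (1 + s) ^ 3 := fun s hs => by
    rw [ellNorm_inv_one_add hn hs.1.le]
    field_simp
  rw [intervalIntegral.integral_of_le zero_le_one, integral_Ioc_eq_integral_Ioo,
    setIntegral_congr_fun measurableSet_Ioo hpt] at hsub
  change (∫ x in (0 : ℝ)..1, ellNorm n x) - 3 / 4 = _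
  linarith

theorem sq_mul_Ifun_sub_eq_integral_defectKernel {n : ℕ} (hn : n ≠ 0) :
    (n : ℝ) ^ 2 * (Ifun n - 3 / 4) = ∫ t in Ioo (0 : ℝ) 1, defectKernel (1 / n) t := by
  have hc : (0 : ℝ) < 1 / n := by positivity
  rw [Ifun_sub_three_div_four hn, ← integral_comp_rpow_Ioo_zero_one_of_pos _ hc, ← mul_assoc,
    ← integral_const_mul]
  refine setIntegral_congr_fun measurableSet_Ioo fun t (ht : t ∈ Ioo 0 1) => ?_
  have htn : (t ^ ((1 : ℝ) / n)) ^ n = t := by rw [one_div, rpow_inv_natCast_pow ht.1.le hn]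
  have hnR : (n : ℝ) ≠ 0 := Nat.cast_ne_zero.2 hn
  simp only [defectKernel, smul_eq_mul, htn]
  field_simp

theorem abs_defectKernel_le_two {c t : ℝ} (hc0 : 0 < c) (hc1 : c ≤ 1) (ht0 : 0 < t) (ht1 : t ≤ 1) :
    |defectKernel c t| ≤ 2 := by
  have hA0 : 0 ≤ ((1 + t) ^ c - 1) / c :=
    div_nonneg (sub_nonneg.2 (one_le_rpow (by linarith) hc0.le)) hc0.le
  have hA : ((1 + t) ^ c - 1) / c ≤ t := by
    rw [div_le_iff₀ hc0]
    linarith [rpow_one_add_le_one_add_mul_self (by linarith : -1 ≤ t) hc0.le hc1]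
  have hB0 : 0 ≤ t ^ (c - 1) := rpow_nonneg ht0.le _
  have hB : t * t ^ (c - 1) ≤ 1 := by
    rw [rpow_sub_one ht0.ne', mul_div_cancel₀ _ ht0.ne']
    exact rpow_le_one ht0.le ht1 hc0.le
  have hD : 1 ≤ (1 + t ^ c) ^ 3 := one_le_pow₀ (by linarith [rpow_nonneg ht0.le c])
  rw [defectKernel, abs_of_nonneg (by positivity), div_le_iff₀ (by positivity)]
  nlinarith [mul_le_mul_of_nonneg_right hA hB0]

theorem tendsto_defectKernel {t : ℝ} (ht : 0 < t) :
    Tendsto (fun c => defectKernel c t) (𝓝[>] 0) (𝓝 (log (1 + t) / (4 * t))) := by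
  have hA := (tendsto_rpow_sub_one_div (a := 1 + t) (by linarith)).mono_left (nhdsGT_le_nhdsNE 0)
  have hB : Tendsto (fun c : ℝ => t ^ (c - 1)) (𝓝[>] 0) (𝓝 t⁻¹) := by
    have := (tendsto_const_nhds (x := t)).rpow ((tendsto_id (x := 𝓝 0)).sub_const 1) (Or.inl ht.ne')
    simpa [rpow_neg_one] using this.mono_left nhdsWithin_le_nhds
  have hD : Tendsto (fun c : ℝ => (1 + t ^ c) ^ 3) (𝓝[>] 0) (𝓝 8) := by
    have := ((tendsto_const_nhds (x := t)).rpow (tendsto_id (x := 𝓝 0)) (Or.inl ht.ne')).const_add 1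
    simpa [show (1 + 1 : ℝ) ^ 3 = 8 by norm_num] using (this.pow 3).mono_left nhdsWithin_le_nhds
  have h := ((hA.const_mul 2).mul hB).div hD (by norm_num)
  rwa [show 2 * log (1 + t) * t⁻¹ / 8 = log (1 + t) / (4 * t) by field_simp; ring] at h

theorem tendsto_integral_defectKernel :
    Tendsto (fun c => ∫ t in Ioo (0 : ℝ) 1, defectKernel c t) (𝓝[>] 0) (𝓝 (π ^ 2 / 48)) := by
  have hlim : ∫ t in Ioo (0 : ℝ) 1, log (1 + t) / (4 * t) = π ^ 2 / 48 := by
    simp_rw [show ∀ t : ℝ, log (1 + t) / (4 * t) = 4⁻¹ * (log (1 + t) / t) from fun t => by ring]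
    rw [integral_const_mul, setIntegral_Ioo_zero_one_log_one_add_div_self]
    ring
  rw [← hlim]
  refine tendsto_integral_filter_of_dominated_convergence (fun _ => 2)
    (Eventually.of_forall fun c => ?_) ?_ (integrable_const 2)
    ((ae_restrict_iff' measurableSet_Ioo).2 (Eventually.of_forall fun t ht =>
      tendsto_defectKernel ht.1))
  · exact (show Measurable (defectKernel c) by unfold defectKernel; fun_prop).aestronglyMeasurable
  · filter_upwards [Ioc_mem_nhdsGT zero_lt_one] with c hc
    exact (ae_restrict_iff' measurableSet_Ioo).2 (Eventually.of_forall fun t ht =>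
      abs_defectKernel_le_two hc.1 hc.2 ht.1 ht.2.le)

theorem stmt18 : Filter.Tendsto (fun n : ℕ => (n:ℝ)^2 * (Ifun n - 3/4)) Filter.atTop (nhds (π^2 / 48)) := by
  have hc : Tendsto (fun n : ℕ => (1 : ℝ) / n) atTop (𝓝[>] 0) := by
    simpa [Function.comp_def] using tendsto_inv_atTop_nhdsGT_zero.comp tendsto_natCast_atTop_atTop
  refine (tendsto_integral_defectKernel.comp hc).congr' ?_
  filter_upwards [eventually_ne_atTop 0] with n hn
  exact (sq_mul_Ifun_sub_eq_integral_defectKernel hn).symm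
end
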